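/- Let A be an (n−1)-category and (I, d, c) a pre-extension of A. In the free extension A[I] (whose n-cells are equivalence classes of C-terms under provable equality), a C-term t is constant (contains no indeterminate) if and only if t is an identity, i.e., ⊢ t = 1_a for some (n−1)-cell a of A. -/
import Mathlib


/-- A globular higher-categorical cell structure: cells of all dimensions,
with domain (`src`), codomain (`tgt`), identity (`ide`) and, for each `k`,
binary composition at level `k` (a total operation; the laws below are
conditioned on the definedness conditions). For `u` of dimension `0`, we set
`src u = tgt u = u`. -/
structure OmegaCat : Type 1 where
  cell : Type
  dim : cell → ℕ
  src : cell → cell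
  tgt : cell → cell
  ide : cell → cell
  comp : ℕ → cell → cell → cell

namespace OmegaCat

/-- The iterated domain `d^{(k)} u` of a cell `u` of dimension `≥ k`. -/
def srcAt (X : OmegaCat) (k : ℕ) (u : X.cell) : X.cell := X.src^[X.dim u - k] u

/-- The iterated codomain `c^{(k)} u` of a cell `u` of dimension `≥ k`. -/
def tgtAt (X : OmegaCat) (k : ℕ) (u : X.cell) : X.cell := X.tgt^[X.dim u - k] u

/-- The iterated identity `1^{(m)}_u` over a cell `u` of dimension `≤ m`. -/
def idePad (X : OmegaCat) (m : ℕ) (u : X.cell) : X.cell := X.ide^[m - X.dim u] u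

/-- Composability of two cells at level `k`: equal dimensions `> k` and
matching iterated domain/codomain at level `k`. -/
def Composable (X : OmegaCat) (k : ℕ) (u v : X.cell) : Prop :=
  X.dim u = X.dim v ∧ k < X.dim u ∧ X.srcAt k u = X.tgtAt k v

/-- Whiskering composition of cells of possibly different dimensions: the
lower-dimensional argument is padded with iterated identities. -/
def wcomp (X : OmegaCat) (k : ℕ) (u v : X.cell) : X.cell :=
  X.comp k (X.idePad (max (X.dim u) (X.dim v)) u)
           (X.idePad (max (X.dim u) (X.dim v)) v)

/-- Parallelism of two cells (any two 0-cells are parallel). -/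
def Par (X : OmegaCat) (a b : X.cell) : Prop :=
  X.dim a = X.dim b ∧ (X.dim a = 0 ∨ (X.src a = X.src b ∧ X.tgt a = X.tgt b))

end OmegaCat

/-- The laws of a strict ω-category: globularity, behaviour of dimensions,
domains and codomains under the operations, associativity, exchange and
identity laws for the compositions. -/
structure OmegaCat.Laws (X : OmegaCat) : Prop where
  src_dim0 : ∀ u, X.dim u = 0 → X.src u = u ∧ X.tgt u = u
  dim_src : ∀ u, 0 < X.dim u → X.dim (X.src u) = X.dim u - 1
  dim_tgt : ∀ u, 0 < X.dim u → X.dim (X.tgt u) = X.dim u - 1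
  src_src : ∀ u, 1 < X.dim u → X.src (X.src u) = X.src (X.tgt u)
  tgt_src : ∀ u, 1 < X.dim u → X.tgt (X.src u) = X.tgt (X.tgt u)
  dim_ide : ∀ u, X.dim (X.ide u) = X.dim u + 1
  src_ide : ∀ u, X.src (X.ide u) = u
  tgt_ide : ∀ u, X.tgt (X.ide u) = u
  dim_comp : ∀ k u v, X.Composable k u v → X.dim (X.comp k u v) = X.dim u
  bd_comp_top : ∀ k u v, X.Composable k u v → k + 1 = X.dim u →
    X.src (X.comp k u v) = X.src v ∧ X.tgt (X.comp k u v) = X.tgt u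
  bd_comp : ∀ k u v, X.Composable k u v → k + 1 < X.dim u →
    X.src (X.comp k u v) = X.comp k (X.src u) (X.src v) ∧
    X.tgt (X.comp k u v) = X.comp k (X.tgt u) (X.tgt v)
  comp_assoc : ∀ k u v w, X.Composable k u v → X.Composable k v w →
    X.comp k (X.comp k u v) w = X.comp k u (X.comp k v w)
  exch : ∀ l k t t₁ s s₁, l < k →
    X.Composable k t t₁ → X.Composable k s s₁ →
    X.Composable l (X.comp k t t₁) (X.comp k s s₁) →
    X.comp l (X.comp k t t₁) (X.comp k s s₁) =
      X.comp k (X.comp l t s) (X.comp l t₁ s₁)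
  comp_id_left : ∀ k u, k < X.dim u →
    X.comp k (X.idePad (X.dim u) (X.tgtAt k u)) u = u
  comp_id_right : ∀ k u, k < X.dim u →
    X.comp k u (X.idePad (X.dim u) (X.srcAt k u)) = u
  ide_comp : ∀ k u v, X.Composable k u v →
    X.ide (X.comp k u v) = X.comp k (X.ide u) (X.ide v)

/-- `F` is (the function underlying) an ω-functor from `X` to `Z`. -/
def IsOmegaFn (X Z : OmegaCat) (F : X.cell → Z.cell) : Prop :=
  (∀ u, Z.dim (F u) = X.dim u) ∧
  (∀ u, 0 < X.dim u → Z.src (F u) = F (X.src u) ∧ Z.tgt (F u) = F (X.tgt u)) ∧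
  (∀ u, F (X.ide u) = Z.ide (F u)) ∧
  (∀ k u v, X.Composable k u v →
    Z.Composable k (F u) (F v) ∧ F (X.comp k u v) = Z.comp k (F u) (F v))

/-- `X` is an `n`-category: every cell of dimension `> n` is an identity. -/
def IsNCat (X : OmegaCat) (n : ℕ) : Prop :=
  ∀ u, n < X.dim u → ∃ v, u = X.ide v

/-- `Z` extends `X` at level `m` via `e`, i.e. `e` identifies the `m`-th
truncation of `X` with that of `Z`. -/
def ExtendsAt (Z X : OmegaCat) (m : ℕ) (e : X.cell → Z.cell) : Prop :=
  (∀ a b, X.dim a ≤ m → X.dim b ≤ m → e a = e b → a = b) ∧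
  (∀ u, Z.dim u ≤ m → ∃ a, X.dim a ≤ m ∧ e a = u) ∧
  (∀ a, X.dim a ≤ m → Z.dim (e a) = X.dim a) ∧
  (∀ a, 0 < X.dim a → X.dim a ≤ m →
    Z.src (e a) = e (X.src a) ∧ Z.tgt (e a) = e (X.tgt a)) ∧
  (∀ a, X.dim a < m → Z.ide (e a) = e (X.ide a)) ∧
  (∀ k a b, X.Composable k a b → X.dim a ≤ m →
    Z.comp k (e a) (e b) = e (X.comp k a b))

/-- The `n`-th truncation of `X` is the free extension of its `(n−1)`-th
truncation generated by the set `I` of `n`-indeterminates: every assignment of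
`I` into an ω-category `Z` extending the `(n−1)`-truncation of `X`, respecting
domains and codomains, extends uniquely to the `n`-truncation of `X`. -/
def FreeAtLevel (X : OmegaCat) (n : ℕ) (I : Set X.cell) : Prop :=
  (∀ x ∈ I, X.dim x = n) ∧
  ∀ (Z : OmegaCat), Z.Laws → ∀ (e : X.cell → Z.cell), ExtendsAt Z X (n-1) e →
    ∀ (φ : X.cell → Z.cell),
      (∀ x ∈ I, Z.dim (φ x) = n ∧ Z.src (φ x) = e (X.src x) ∧
        Z.tgt (φ x) = e (X.tgt x)) →
      ∃ G : X.cell → Z.cell,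
        ((∀ u, X.dim u ≤ n - 1 → G u = e u) ∧ (∀ x ∈ I, G x = φ x) ∧
         (∀ u, X.dim u ≤ n → Z.dim (G u) = X.dim u) ∧
         (∀ u, 0 < X.dim u → X.dim u ≤ n →
           Z.src (G u) = G (X.src u) ∧ Z.tgt (G u) = G (X.tgt u)) ∧
         (∀ k u v, X.Composable k u v → X.dim u ≤ n →
           G (X.comp k u v) = Z.comp k (G u) (G v)) ∧
         (∀ u, X.dim u < n → G (X.ide u) = Z.ide (G u))) ∧
        ∀ G' : X.cell → Z.cell,
          ((∀ u, X.dim u ≤ n - 1 → G' u = e u) ∧ (∀ x ∈ I, G' x = φ x) ∧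
           (∀ u, X.dim u ≤ n → Z.dim (G' u) = X.dim u) ∧
           (∀ u, 0 < X.dim u → X.dim u ≤ n →
             Z.src (G' u) = G' (X.src u) ∧ Z.tgt (G' u) = G' (X.tgt u)) ∧
           (∀ k u v, X.Composable k u v → X.dim u ≤ n →
             G' (X.comp k u v) = Z.comp k (G' u) (G' v)) ∧
           (∀ u, X.dim u < n → G' (X.ide u) = Z.ide (G' u))) →
          ∀ u, X.dim u ≤ n → G' u = G u
/-- Raw composition terms over `n`-indeterminates `I` and cells of the ambient
`(n−1)`-category: indeterminates, identity symbols `1_a` for `(n−1)`-cells `a`,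
and binary compositions `t •_k s`. -/
inductive CTerm (I : Type) (cell : Type) : Type
  | ind : I → CTerm I cell
  | idt : cell → CTerm I cell
  | comp : CTerm I cell → ℕ → CTerm I cell → CTerm I cell

/-- The domain of a `C`-term, an `(n−1)`-cell (when defined):
`d x = dI x`, `d 1_a = a`, `d (t •_{n−1} s) = d s`,
`d (t •_k s) = d t •_k d s` for `k < n−1`. -/
def tdom (X : OmegaCat) (n : ℕ) {I : Type} (dI : I → X.cell) :
    CTerm I X.cell → Option X.cell
  | .ind x => some (dI x)
  | .idt a => some a
  | .comp t k s =>
    if k + 1 = n then tdom X n dI s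
    else match tdom X n dI t, tdom X n dI s with
      | some a, some b => some (X.comp k a b)
      | _, _ => none

/-- The codomain of a `C`-term (when defined). -/
def tcod (X : OmegaCat) (n : ℕ) {I : Type} (cI : I → X.cell) :
    CTerm I X.cell → Option X.cell
  | .ind x => some (cI x)
  | .idt a => some a
  | .comp t k s =>
    if k + 1 = n then tcod X n cI t
    else match tcod X n cI t, tcod X n cI s with
      | some a, some b => some (X.comp k a b)
      | _, _ => none

/-- Well-formed `C`-terms: identity symbols carry `(n−1)`-cells, and in
`t •_k s` one has `k < n` and `d^{(k)} t = c^{(k)} s`. -/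
inductive WFC (X : OmegaCat) (n : ℕ) {I : Type} (dI cI : I → X.cell) :
    CTerm I X.cell → Prop
  | ind (x : I) : WFC X n dI cI (.ind x)
  | idt (a : X.cell) : X.dim a = n - 1 → WFC X n dI cI (.idt a)
  | comp (t : CTerm I X.cell) (k : ℕ) (s : CTerm I X.cell) :
      WFC X n dI cI t → WFC X n dI cI s → k < n →
      (∃ a ∈ tdom X n dI t, ∃ b ∈ tcod X n cI s, X.srcAt k a = X.tgtAt k b) →
      WFC X n dI cI (.comp t k s)

/-- The equational deduction system `C` for composition terms: associativity,
exchange and identity axioms, with equivalence and congruence rules (all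
compositions assumed well-formed). -/
inductive CDeriv (X : OmegaCat) (n : ℕ) {I : Type} (dI cI : I → X.cell) :
    CTerm I X.cell → CTerm I X.cell → Prop
  | refl (t) : WFC X n dI cI t → CDeriv X n dI cI t t
  | assocAx (t k s w) :
      WFC X n dI cI (.comp (.comp t k s) k w) →
      WFC X n dI cI (.comp t k (.comp s k w)) →
      CDeriv X n dI cI (.comp (.comp t k s) k w) (.comp t k (.comp s k w))
  | exchAx (l k t t₁ s s₁) : l < k → k < n →
      WFC X n dI cI (.comp (.comp t k t₁) l (.comp s k s₁)) →
      WFC X n dI cI (.comp (.comp t l s) k (.comp t₁ l s₁)) →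
      CDeriv X n dI cI (.comp (.comp t k t₁) l (.comp s k s₁))
        (.comp (.comp t l s) k (.comp t₁ l s₁))
  | idLeft (t k b) :
      WFC X n dI cI (.comp (.idt (X.idePad (n-1) b)) k t) →
      (∃ c ∈ tcod X n cI t, X.tgtAt k c = b) →
      CDeriv X n dI cI (.comp (.idt (X.idePad (n-1) b)) k t) t
  | idRight (t k a) :
      WFC X n dI cI (.comp t k (.idt (X.idePad (n-1) a))) →
      (∃ c ∈ tdom X n dI t, X.srcAt k c = a) →
      CDeriv X n dI cI (.comp t k (.idt (X.idePad (n-1) a))) t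
  | idComp (a b k) :
      WFC X n dI cI (.comp (.idt a) k (.idt b)) → X.Composable k a b →
      CDeriv X n dI cI (.comp (.idt a) k (.idt b)) (.idt (X.comp k a b))
  | symm {t s} : CDeriv X n dI cI t s → CDeriv X n dI cI s t
  | trans {t s w} : CDeriv X n dI cI t s → CDeriv X n dI cI s w →
      CDeriv X n dI cI t w
  | congL {t s} (w k) : CDeriv X n dI cI t s →
      WFC X n dI cI (.comp t k w) → WFC X n dI cI (.comp s k w) →
      CDeriv X n dI cI (.comp t k w) (.comp s k w)
  | congR {t s} (w k) : CDeriv X n dI cI t s →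
      WFC X n dI cI (.comp w k t) → WFC X n dI cI (.comp w k s) →
      CDeriv X n dI cI (.comp w k t) (.comp w k s)

/-- `x` occurs in the term `t`. -/
def occursIn {I cell : Type} (x : I) : CTerm I cell → Prop
  | .ind y => y = x
  | .idt _ => False
  | .comp t _ s => occursIn x t ∨ occursIn x s

/-- Derivable equality preserves occurring indeterminates. -/
lemma cderiv_occurs {X : OmegaCat} {n : ℕ} {I : Type} {dI cI : I → X.cell}
    {t s : CTerm I X.cell} (h : CDeriv X n dI cI t s) (x : I) :
    occursIn x t ↔ occursIn x s := by
  induction h <;> simp_all [occursIn] <;> tauto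

/-- Main lemma: a constant well-formed term has defined, equal domain and
codomain `a`, and is derivably equal to `1_a`. -/
lemma constant_main {X : OmegaCat} (hX : X.Laws) {n : ℕ} (hn : 1 ≤ n)
    {I : Type} {dI cI : I → X.cell}
    {t : CTerm I X.cell} (hwf : WFC X n dI cI t) (hc : ∀ x, ¬ occursIn x t) :
    ∃ a, X.dim a = n - 1 ∧ tdom X n dI t = some a ∧ tcod X n cI t = some a ∧
      CDeriv X n dI cI t (.idt a) := by
  induction hwf with
  | ind x => exact absurd rfl (hc x)
  | idt a ha =>
      exact ⟨a, ha, rfl, rfl, CDeriv.refl _ (WFC.idt a ha)⟩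
  | comp t k s hwt hws hk hex iht ihs =>
      have hct : ∀ x, ¬ occursIn x t := fun x hx => hc x (Or.inl hx)
      have hcs : ∀ x, ¬ occursIn x s := fun x hx => hc x (Or.inr hx)
      obtain ⟨a, ha, hta, hca, hda⟩ := iht hct
      obtain ⟨b, hb, htb, hcb, hdb⟩ := ihs hcs
      obtain ⟨a', ha', b', hb', hcond⟩ := hex
      rw [hta, Option.mem_def, Option.some_inj] at ha'
      rw [hcb, Option.mem_def, Option.some_inj] at hb'
      subst ha'; subst hb'
      -- well-formedness of the intermediate terms
      have hwf0 : WFC X n dI cI (.comp t k s) :=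
        WFC.comp t k s hwt hws hk ⟨a, by rw [hta]; rfl, b, by rw [hcb]; rfl, hcond⟩
      have hwfa : WFC X n dI cI (CTerm.idt a) := WFC.idt a ha
      have hwfb : WFC X n dI cI (CTerm.idt b) := WFC.idt b hb
      have hwf1 : WFC X n dI cI (.comp (.idt a) k s) :=
        WFC.comp _ k s hwfa hws hk ⟨a, rfl, b, by rw [hcb]; rfl, hcond⟩
      have hwf2 : WFC X n dI cI (.comp (.idt a) k (.idt b)) :=
        WFC.comp _ k _ hwfa hwfb hk ⟨a, rfl, b, rfl, hcond⟩
      have der1 : CDeriv X n dI cI (.comp t k s) (.comp (.idt a) k s) :=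
        CDeriv.congL s k hda hwf0 hwf1
      have der2 : CDeriv X n dI cI (.comp (.idt a) k s) (.comp (.idt a) k (.idt b)) :=
        CDeriv.congR _ k hdb hwf1 hwf2
      by_cases hkn : k + 1 = n
      · -- top-dimensional composition: the two cells must coincide
        have hk1 : k = n - 1 := by omega
        have hsa : X.srcAt k a = a := by
          simp [OmegaCat.srcAt, ha, hk1]
        have htb' : X.tgtAt k b = b := by
          simp [OmegaCat.tgtAt, hb, hk1]
        have hab : a = b := by rw [hsa, htb'] at hcond; exact hcond
        subst hab
        have hpad : X.idePad (n-1) a = a := by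
          simp [OmegaCat.idePad, ha]
        have der3 : CDeriv X n dI cI (.comp (.idt a) k (.idt a)) (.idt a) := by
          have := CDeriv.idLeft (X := X) (n := n) (dI := dI) (cI := cI)
            (CTerm.idt a) k a (by rw [hpad]; exact hwf2)
            ⟨a, rfl, htb'⟩
          rwa [hpad] at this
        refine ⟨a, ha, ?_, ?_, (der1.trans der2).trans der3⟩
        · simp [tdom, hkn, htb]
        · simp [tcod, hkn, hca]
      · -- lower-dimensional composition: use the identity-composition axiom
        have hklt : k < n - 1 := by omega
        have hcomp : X.Composable k a b :=
          ⟨ha.trans hb.symm, by omega, hcond⟩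
        have der3 : CDeriv X n dI cI (.comp (.idt a) k (.idt b))
            (.idt (X.comp k a b)) := CDeriv.idComp a b k hwf2 hcomp
        refine ⟨X.comp k a b, by rw [hX.dim_comp k a b hcomp, ha], ?_, ?_,
          (der1.trans der2).trans der3⟩
        · simp [tdom, hkn, hta, htb]
        · simp [tcod, hkn, hca, hcb]

/-- A well-formed `C`-term over an `(n−1)`-category with `n`-indeterminates is
constant (no indeterminate occurs in it) if and only if it is an identity,
i.e. provably equal to `1_a` for some `(n−1)`-cell `a`. -/
theorem stmt11 (X : OmegaCat) (hX : X.Laws) (n : ℕ) (hn : 1 ≤ n)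
    (hXcat : IsNCat X (n-1))
    (I : Type) (dI cI : I → X.cell)
    (hpre : ∀ x, X.dim (dI x) = n - 1 ∧ X.dim (cI x) = n - 1 ∧
      X.Par (dI x) (cI x)) :
    ∀ t, WFC X n dI cI t →
      ((∀ x, ¬ occursIn x t) ↔
        ∃ a, X.dim a = n - 1 ∧ CDeriv X n dI cI t (.idt a)) := by
  intro t hwf
  constructor
  · intro hc
    obtain ⟨a, ha, _, _, hd⟩ := constant_main hX hn hwf hc
    exact ⟨a, ha, hd⟩
  · rintro ⟨a, ha, hd⟩ x hx
    exact (cderiv_occurs hd x).mp hx
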